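/- Let G and H be groups and suppose that for every finite subset S of G there is a homomorphism h : G → H injective on S. If H is linear of degree n over a field K (H ≤ GL_n(K)), then G embeds in GL_n(F) for some field F. -/
import Mathlib


open scoped MatrixGroups
open Filter

/-- If a group `G` is discriminated by a subgroup `H` of `GL n K`, for `K` a field, then
`G` is linear of the same degree: `G` embeds into `GL n F` for some field `F` (which can
be taken to be an ultrapower of `K`). -/
theorem stmt_12.{u, v} (G : Type u) [Group G] (n : ℕ) (K : Type v) [Field K]
    (H : Subgroup (GL (Fin n) K))
    (hdisc : ∀ S : Finset G, ∃ h : G →* H, Set.InjOn h ↑S) :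
    ∃ (F : Type (max u v)) (_ : Field F) (f : G →* GL (Fin n) F),
      Function.Injective f := by
  classical
  have hne : ∃ g : G, True := ⟨1, trivial⟩
  set I := Finset G
  have : Nonempty I := ⟨∅⟩
  let U : Ultrafilter I := Ultrafilter.of atTop
  have hU : (U : Filter I) ≤ atTop := Ultrafilter.of_le _
  let F := (U : Filter I).Germ K
  letI : Field F := Filter.Germ.instField
  choose h hinj using hdisc
  let A : G → I → Matrix (Fin n) (Fin n) K := fun g S => ((h S g : GL (Fin n) K) : Matrix (Fin n) (Fin n) K)
  let M : G → Matrix (Fin n) (Fin n) F := fun g i j => ((fun S => A g S i j : I → K) : F)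
  have hAmul : ∀ g g' : G, ∀ S : I, A (g * g') S = A g S * A g' S := by
    intro g g' S
    simp only [A, map_mul]
    rfl
  have hM1 : M 1 = 1 := by
    ext i j
    have : ∀ S : I, A 1 S = 1 := by intro S; simp [A]
    simp only [M]
    simp only [this]
    by_cases hij : i = j <;> simp [Matrix.one_apply, hij]
    · rfl
    · rfl
  have hMmul : ∀ g g' : G, M (g * g') = M g * M g' := by
    intro g g'
    ext i j
    simp only [M, Matrix.mul_apply]
    have step1 : ((fun S => A (g * g') S i j : I → K) : F)
        = ((fun S => ∑ k, A g S i k * A g' S k j : I → K) : F) := by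
      congr 1
      funext S
      simp [hAmul, Matrix.mul_apply]
    rw [step1]
    have step2 := map_sum (Filter.Germ.coeRingHom (U : Filter I))
      (fun k => (fun S => A g S i k * A g' S k j : I → K)) Finset.univ
    simp only [Filter.Germ.coe_coeRingHom] at step2
    have step3 : (fun S => ∑ k, A g S i k * A g' S k j : I → K)
        = ∑ k, (fun S => A g S i k * A g' S k j : I → K) := by
      funext S; simp
    rw [show ((fun S => ∑ k, A g S i k * A g' S k j : I → K) : F)
        = Filter.Germ.ofFun (fun S => ∑ k, A g S i k * A g' S k j : I → K) from rfl,
      step3, step2]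
    exact Finset.sum_congr rfl fun k _ => (Filter.Germ.coe_mul _ _)
  refine ⟨F, inferInstance, ⟨⟨fun g => ⟨M g, M g⁻¹, ?_, ?_⟩, ?_⟩, ?_⟩, ?_⟩
  · rw [← hMmul, mul_inv_cancel, hM1]
  · rw [← hMmul, inv_mul_cancel, hM1]
  · exact Units.ext hM1
  · intro g g'; exact Units.ext (hMmul g g')
  · intro g g' hgg'
    by_contra hne
    have hMeq : M g = M g' := congrArg Units.val hgg'
    have hev : ∀ᶠ S in (U : Filter I), A g S = A g' S := by
      have : ∀ i j, ((fun S => A g S i j : I → K) : F) = ((fun S => A g' S i j : I → K) : F) := by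
        intro i j
        exact congrFun (congrFun hMeq i) j
      have h2 : ∀ i j, ∀ᶠ S in (U : Filter I), A g S i j = A g' S i j := by
        intro i j
        exact Filter.Germ.coe_eq.mp (this i j)
      have := fun i => (Filter.eventually_all (ι := Fin n)).mpr (h2 i)
      have := (Filter.eventually_all (ι := Fin n)).mpr this
      filter_upwards [this] with S hS
      ext i j
      exact hS i j
    have hmem : ∀ᶠ S in (U : Filter I), ({g, g'} : Finset G) ⊆ S :=
      hU (Filter.eventually_ge_atTop ({g, g'} : Finset G))
    obtain ⟨S, hAS, hsub⟩ := (hev.and hmem).exists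
    have hgS : g ∈ (S : Set G) := by
      simpa using hsub (by simp : g ∈ ({g, g'} : Finset G))
    have hg'S : g' ∈ (S : Set G) := by
      simpa using hsub (by simp : g' ∈ ({g, g'} : Finset G))
    have : h S g = h S g' := by
      apply Subtype.coe_injective
      exact Units.ext hAS
    exact hne (hinj S hgS hg'S this)
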